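/- arXiv:1510.06522 — 7 statements merged into one kernel-verified Lean document; each statement's English description precedes it below -/
import Mathlib

section
/- For any r ∈ ℝ^m and reals y_i, z: if either ((B1) holds and y_i ≥ ⌊ȳ_i⌋ + 1) or ((B2) holds and y_i ≤ ⌊ȳ_i⌋), then (F-BMI) holds. In other words, (F-BMI) is valid for the union {(y_i, z) ∈ ℝ² : (B1), y_i ≥ ⌈ȳ_i⌉} ∪ {(y_i, z) ∈ ℝ² : (B2), y_i ≤ ⌊ȳ_i⌋}. -/
open Matrix Finset

/-- If either ((B1) holds and `y_i ≥ ⌊ȳ_i⌋ + 1`) or ((B2) holds and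
`y_i ≤ ⌊ȳ_i⌋`), then (F-BMI) holds. -/
theorem stmt_5 (m : ℕ) (hm : 0 < m)
    (A : Matrix (Fin m) (Fin m) ℝ) (hA : IsUnit A.det)
    (hAint : ∀ k j, ∃ z : ℤ, A k j = (z : ℝ))
    (c : Fin m → ℝ) (hcint : ∀ k, ∃ z : ℤ, c k = (z : ℝ))
    (ybar : Fin m → ℝ) (hybar : ybar = Matrix.vecMul c A⁻¹)
    (i : Fin m) (hfrac : ¬ ∃ z : ℤ, ybar i = (z : ℝ))
    (f : ℝ) (hf : f = ybar i - (⌊ybar i⌋ : ℝ))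
    (r : Fin m → ℝ) (yi z : ℝ)
    (h : ((1 + A.mulVec r i) * yi + z ≤ ybar i + ybar ⬝ᵥ A.mulVec r ∧
            (⌊ybar i⌋ : ℝ) + 1 ≤ yi) ∨
         ((A.mulVec r i) * yi + z ≤ ybar ⬝ᵥ A.mulVec r ∧ yi ≤ (⌊ybar i⌋ : ℝ))) :
    ((1 + A.mulVec r i) - f) * yi + z ≤ ybar ⬝ᵥ A.mulVec r - (f - 1) * (⌊ybar i⌋ : ℝ) := by
  have hfl : (⌊ybar i⌋ : ℝ) ≤ ybar i := Int.floor_le _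
  have hne : (⌊ybar i⌋ : ℝ) ≠ ybar i := fun he => hfrac ⟨⌊ybar i⌋, he.symm⟩
  have hf0 : 0 < f := by rw [hf]; have := lt_of_le_of_ne hfl hne; linarith
  have hf1 : f < 1 := by
    rw [hf]
    have := Int.lt_floor_add_one (ybar i)
    linarith
  rcases h with ⟨hb, hy⟩ | ⟨hb, hy⟩
  · nlinarith [mul_le_mul_of_nonneg_left hy hf0.le]
  · nlinarith [mul_le_mul_of_nonneg_left hy (by linarith : (0:ℝ) ≤ 1 - f)]
end

section
/- For any r ∈ ℝ^m, the point (y_i, z) = (ȳ_i, z*) with z* := Σ_{j≠i} (α_jᵀ r)·ȳ_j violates the inequality (F-BMI); that is, ((1 + α_iᵀ r) − f)·ȳ_i + z* > ȳᵀ A_β r − (f − 1)·⌊ȳ_i⌋. -/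
open Matrix Finset

/-- The point `(ȳ_i, z*)` with `z* = Σ_{j≠i} (α_jᵀ r)·ȳ_j` violates (F-BMI). -/
theorem stmt_6 (m : ℕ) (hm : 0 < m)
    (A : Matrix (Fin m) (Fin m) ℝ) (hA : IsUnit A.det)
    (hAint : ∀ k j, ∃ z : ℤ, A k j = (z : ℝ))
    (c : Fin m → ℝ) (hcint : ∀ k, ∃ z : ℤ, c k = (z : ℝ))
    (ybar : Fin m → ℝ) (hybar : ybar = Matrix.vecMul c A⁻¹)
    (i : Fin m) (hfrac : ¬ ∃ z : ℤ, ybar i = (z : ℝ))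
    (f : ℝ) (hf : f = ybar i - (⌊ybar i⌋ : ℝ))
    (r : Fin m → ℝ)
    (zstar : ℝ) (hzstar : zstar = ∑ j ∈ Finset.univ.erase i, (A.mulVec r j) * ybar j) :
    ((1 + A.mulVec r i) - f) * ybar i + zstar >
      ybar ⬝ᵥ A.mulVec r - (f - 1) * (⌊ybar i⌋ : ℝ) := by
  have hne : ybar i ≠ (⌊ybar i⌋ : ℝ) := fun h => hfrac ⟨⌊ybar i⌋, h⟩
  have h0 : 0 < f := by
    have := Int.floor_le (ybar i)
    have : (⌊ybar i⌋ : ℝ) < ybar i := lt_of_le_of_ne this (Ne.symm hne)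
    linarith
  have h1 : f < 1 := by
    have := Int.lt_floor_add_one (ybar i)
    linarith
  have key : ybar ⬝ᵥ A.mulVec r = A.mulVec r i * ybar i + zstar := by
    rw [hzstar, dotProduct]
    rw [← Finset.add_sum_erase _ _ (Finset.mem_univ i)]
    ring_nf
    congr 1
    exact Finset.sum_congr rfl fun j _ => by ring
  rw [key, hf]
  nlinarith [mul_pos h0 (by linarith : (0:ℝ) < 1 - f)]
end

section
/- For any r ∈ ℝ^m, the point ȳ violates the F-GMI inequality; that is, ȳᵀ(A_β r − (f − 1)·e_i) > c_βᵀ r − (f − 1)·⌊ȳ_i⌋. -/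
open Matrix Finset

/-- The point `ȳ` violates the F-GMI inequality:
`ȳᵀ(A_β r − (f − 1)·e_i) > c_βᵀ r − (f − 1)·⌊ȳ_i⌋`. -/
theorem stmt_7 (m : ℕ) (hm : 0 < m)
    (A : Matrix (Fin m) (Fin m) ℝ) (hA : IsUnit A.det)
    (hAint : ∀ k j, ∃ z : ℤ, A k j = (z : ℝ))
    (c : Fin m → ℝ) (hcint : ∀ k, ∃ z : ℤ, c k = (z : ℝ))
    (ybar : Fin m → ℝ) (hybar : ybar = Matrix.vecMul c A⁻¹)
    (i : Fin m) (hfrac : ¬ ∃ z : ℤ, ybar i = (z : ℝ))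
    (f : ℝ) (hf : f = ybar i - (⌊ybar i⌋ : ℝ))
    (r : Fin m → ℝ) :
    ybar ⬝ᵥ ((A.mulVec r - (f - 1) • (Pi.single i 1 : Fin m → ℝ))) >
      c ⬝ᵥ r - (f - 1) * (⌊ybar i⌋ : ℝ) := by
  have h1 : ybar ⬝ᵥ A.mulVec r = c ⬝ᵥ r := by
    rw [dotProduct_mulVec, hybar, vecMul_vecMul, Matrix.nonsing_inv_mul A hA,
      vecMul_one]
  have h2 : ybar ⬝ᵥ ((f - 1) • (Pi.single i 1 : Fin m → ℝ)) = (f - 1) * ybar i := by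
    rw [dotProduct_smul, dotProduct_single, mul_one]
    rfl
  rw [dotProduct_sub, h1, h2]
  have hlt : (⌊ybar i⌋ : ℝ) < ybar i := by
    rcases lt_or_eq_of_le (Int.floor_le (ybar i)) with h | h
    · exact h
    · exact absurd ⟨⌊ybar i⌋, h.symm⟩ hfrac
  have hfl : f - 1 < 0 := by
    have := Int.lt_floor_add_one (ybar i)
    rw [hf]; linarith
  nlinarith
end

section
/- Suppose r ∈ ℝ^m satisfies condition (κ). Then every y ∈ ℝ^m with yᵀ A_β ≤ c_βᵀ and with either y_i ≥ ⌊ȳ_i⌋ + 1 or y_i ≤ ⌊ȳ_i⌋ satisfies the F-GMI inequality. In other words, F-GMI is valid for {y ∈ ℝ^m : yᵀA_β ≤ c_βᵀ, y_i ≥ ⌈ȳ_i⌉} ∪ {y ∈ ℝ^m : yᵀA_β ≤ c_βᵀ, y_i ≤ ⌊ȳ_i⌋}. -/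
open Matrix Finset

/-- If `r` satisfies condition (κ), then every `y` with `yᵀ A_β ≤ c_βᵀ`
and with either `y_i ≥ ⌊ȳ_i⌋ + 1` or `y_i ≤ ⌊ȳ_i⌋` satisfies the F-GMI inequality. -/
theorem stmt_8 (m : ℕ) (hm : 0 < m)
    (A : Matrix (Fin m) (Fin m) ℝ) (hA : IsUnit A.det)
    (hAint : ∀ k j, ∃ z : ℤ, A k j = (z : ℝ))
    (c : Fin m → ℝ) (hcint : ∀ k, ∃ z : ℤ, c k = (z : ℝ))
    (ybar : Fin m → ℝ) (hybar : ybar = Matrix.vecMul c A⁻¹)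
    (i : Fin m) (hfrac : ¬ ∃ z : ℤ, ybar i = (z : ℝ))
    (f : ℝ) (hf : f = ybar i - (⌊ybar i⌋ : ℝ))
    (r : Fin m → ℝ)
    (hrZ : ∀ k, ∃ z : ℤ, r k = (z : ℝ))
    (hrH : ∀ k, -(A⁻¹ k i) ≤ r k)
    (hr0 : ∀ k, 0 ≤ r k)
    (y : Fin m → ℝ) (hy : ∀ j, Matrix.vecMul y A j ≤ c j)
    (hyi : (⌊ybar i⌋ : ℝ) + 1 ≤ y i ∨ y i ≤ (⌊ybar i⌋ : ℝ)) :
    y ⬝ᵥ ((A.mulVec r - (f - 1) • (Pi.single i 1 : Fin m → ℝ))) ≤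
      c ⬝ᵥ r - (f - 1) * (⌊ybar i⌋ : ℝ) := by
  have hAinv : A * A⁻¹ = 1 := Matrix.mul_nonsing_inv A hA
  have hfl : (⌊ybar i⌋ : ℝ) ≤ ybar i := Int.floor_le _
  have hf0 : 0 < f := by
    rcases lt_or_eq_of_le hfl with h | h
    · rw [hf]; linarith
    · exact absurd ⟨⌊ybar i⌋, h.symm⟩ hfrac
  have hf1 : f < 1 := by
    have := Int.lt_floor_add_one (ybar i)
    rw [hf]; linarith
  have hdm : y ⬝ᵥ A.mulVec r = Matrix.vecMul y A ⬝ᵥ r := Matrix.dotProduct_mulVec y A r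
  have hsingle : y ⬝ᵥ ((f - 1) • (Pi.single i 1 : Fin m → ℝ)) = (f - 1) * y i := by
    simp [dotProduct, Pi.single_apply, mul_ite, Finset.sum_ite_eq', mul_comm]
  have h1 : Matrix.vecMul y A ⬝ᵥ r ≤ c ⬝ᵥ r :=
    Finset.sum_le_sum fun k _ => mul_le_mul_of_nonneg_right (hy k) (hr0 k)
  have hkey : Matrix.vecMul (c - Matrix.vecMul y A) A⁻¹ i = ybar i - y i := by
    rw [Matrix.sub_vecMul, Matrix.vecMul_vecMul, hAinv, Matrix.vecMul_one, hybar]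
    rfl
  have h2' : ∑ k, (c k - Matrix.vecMul y A k) * (-(A⁻¹ k i)) ≤
      ∑ k, (c k - Matrix.vecMul y A k) * r k :=
    Finset.sum_le_sum fun k _ =>
      mul_le_mul_of_nonneg_left (hrH k) (by linarith [hy k])
  have hL : ∑ k, (c k - Matrix.vecMul y A k) * (-(A⁻¹ k i)) = -(ybar i - y i) := by
    rw [← hkey]
    simp [Matrix.vecMul, dotProduct, mul_neg, Finset.sum_neg_distrib]
  have hR : ∑ k, (c k - Matrix.vecMul y A k) * r k = c ⬝ᵥ r - Matrix.vecMul y A ⬝ᵥ r := by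
    simp [dotProduct, sub_mul, Finset.sum_sub_distrib]
  have hS : y i - ybar i ≤ c ⬝ᵥ r - Matrix.vecMul y A ⬝ᵥ r := by
    rw [← hR]; linarith [h2', hL]
  rw [dotProduct_sub, hdm, hsingle]
  have hybari : ybar i = (⌊ybar i⌋ : ℝ) + f := by rw [hf]; ring
  rcases hyi with h | h
  · nlinarith [hS, mul_nonneg hf0.le (by linarith : (0:ℝ) ≤ y i - (⌊ybar i⌋ : ℝ) - 1)]
  · nlinarith [h1, mul_nonneg (by linarith : (0:ℝ) ≤ 1 - f)
      (by linarith : (0:ℝ) ≤ (⌊ybar i⌋ : ℝ) - y i)]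
end

section
/- Suppose r ∈ ℝ^m satisfies condition (κ). Then every y ∈ ℝ^m with yᵀ A_β ≤ c_βᵀ and such that y_i is an integer satisfies the F-GMI inequality. -/
open Matrix Finset

/-- If `r` satisfies condition (κ), then every `y` with `yᵀ A_β ≤ c_βᵀ`
and `y_i ∈ ℤ` satisfies the F-GMI inequality. -/
theorem stmt_9 (m : ℕ) (hm : 0 < m)
    (A : Matrix (Fin m) (Fin m) ℝ) (hA : IsUnit A.det)
    (hAint : ∀ k j, ∃ z : ℤ, A k j = (z : ℝ))
    (c : Fin m → ℝ) (hcint : ∀ k, ∃ z : ℤ, c k = (z : ℝ))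
    (ybar : Fin m → ℝ) (hybar : ybar = Matrix.vecMul c A⁻¹)
    (i : Fin m) (hfrac : ¬ ∃ z : ℤ, ybar i = (z : ℝ))
    (f : ℝ) (hf : f = ybar i - (⌊ybar i⌋ : ℝ))
    (r : Fin m → ℝ)
    (hrZ : ∀ k, ∃ z : ℤ, r k = (z : ℝ))
    (hrH : ∀ k, -(A⁻¹ k i) ≤ r k)
    (hr0 : ∀ k, 0 ≤ r k)
    (y : Fin m → ℝ) (hy : ∀ j, Matrix.vecMul y A j ≤ c j)
    (hyi : ∃ z : ℤ, y i = (z : ℝ)) :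
    y ⬝ᵥ ((A.mulVec r - (f - 1) • (Pi.single i 1 : Fin m → ℝ))) ≤
      c ⬝ᵥ r - (f - 1) * (⌊ybar i⌋ : ℝ) := by
  obtain ⟨z, hz⟩ := hyi
  have hAinv : A * A⁻¹ = 1 := Matrix.mul_nonsing_inv A hA
  have hyv : Matrix.vecMul (Matrix.vecMul y A) A⁻¹ = y := by
    rw [Matrix.vecMul_vecMul, hAinv, Matrix.vecMul_one]
  set d : Fin m → ℝ := fun j => c j - Matrix.vecMul y A j with hd
  have hd0 : ∀ j, 0 ≤ d j := fun j => sub_nonneg.2 (hy j)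
  have hS0 : 0 ≤ ∑ j, d j * r j :=
    Finset.sum_nonneg fun j _ => mul_nonneg (hd0 j) (hr0 j)
  -- key identity sums
  have e1 : ybar i = ∑ j, c j * A⁻¹ j i := by
    rw [hybar]; simp [Matrix.vecMul, dotProduct]
  have e2 : y i = ∑ j, Matrix.vecMul y A j * A⁻¹ j i := by
    conv_lhs => rw [← hyv]
    simp [Matrix.vecMul, dotProduct]
  have hS1 : y i - ybar i ≤ ∑ j, d j * r j := by
    have h1 : 0 ≤ ∑ j, d j * (r j + A⁻¹ j i) :=
      Finset.sum_nonneg fun j _ => mul_nonneg (hd0 j) (by linarith [hrH j])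
    have h2 : ∑ j, d j * (r j + A⁻¹ j i)
        = (∑ j, d j * r j)
          + ((∑ j, c j * A⁻¹ j i) - ∑ j, Matrix.vecMul y A j * A⁻¹ j i) := by
      rw [← Finset.sum_sub_distrib, ← Finset.sum_add_distrib]
      refine Finset.sum_congr rfl fun j _ => ?_
      simp only [hd]; ring
    rw [h2] at h1
    rw [e1, e2]
    linarith
  -- fractional part facts
  have hfl : (⌊ybar i⌋ : ℝ) ≠ ybar i := by
    intro h; exact hfrac ⟨⌊ybar i⌋, h.symm⟩
  have hf0 : 0 < f := by
    rw [hf]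
    have := Int.floor_le (ybar i)
    rcases lt_or_eq_of_le this with h | h
    · linarith
    · exact absurd h hfl
  have hf1 : f < 1 := by
    rw [hf]
    have := Int.lt_floor_add_one (ybar i)
    linarith
  -- rewrite goal
  have hgoal : y ⬝ᵥ ((A.mulVec r - (f - 1) • (Pi.single i 1 : Fin m → ℝ)))
      = Matrix.vecMul y A ⬝ᵥ r - (f - 1) * y i := by
    rw [dotProduct_sub, dotProduct_smul, Matrix.dotProduct_mulVec]
    simp [smul_eq_mul, mul_comm]
  have hdot : c ⬝ᵥ r - Matrix.vecMul y A ⬝ᵥ r = ∑ j, d j * r j := by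
    simp only [dotProduct, ← Finset.sum_sub_distrib]
    refine Finset.sum_congr rfl fun j _ => ?_
    simp only [hd]; ring
  rw [hgoal]
  rw [hz] at hS1 ⊢
  have hzf : (z : ℝ) ≤ (⌊ybar i⌋ : ℝ) ∨ (⌊ybar i⌋ : ℝ) + 1 ≤ (z : ℝ) := by
    rcases le_or_gt z ⌊ybar i⌋ with h | h
    · exact Or.inl (by exact_mod_cast h)
    · exact Or.inr (by exact_mod_cast h)
  have hfle : ybar i ≤ (⌊ybar i⌋ : ℝ) + f := by rw [hf]; ring_nf; linarith
  rcases hzf with h | h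
  · nlinarith [hS0, hdot]
  · nlinarith [hS1, hdot, hf0]
end

section
/- Define r* ∈ ℝ^m by r*_k := max{0, −⌊h_{ki}⌋} for k = 1, …, m, and let r' ∈ ℝ^m satisfy condition (κ) with r' ≥ r* componentwise. Then the F-GMI cut using r* dominates the F-GMI cut using r': for every y ∈ ℝ^m with yᵀ A_β ≤ c_βᵀ, if y satisfies the F-GMI inequality for r*, then y satisfies the F-GMI inequality for r'. -/
open Matrix Finset

/-- If `r'` satisfies (κ) and `r' ≥ r*`, then for every `y` with
`yᵀ A_β ≤ c_βᵀ`, the F-GMI inequality for `r*` implies the F-GMI inequality for `r'`. -/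
theorem stmt_14 (m : ℕ) (hm : 0 < m)
    (A : Matrix (Fin m) (Fin m) ℝ) (hA : IsUnit A.det)
    (hAint : ∀ k j, ∃ z : ℤ, A k j = (z : ℝ))
    (c : Fin m → ℝ) (hcint : ∀ k, ∃ z : ℤ, c k = (z : ℝ))
    (ybar : Fin m → ℝ) (hybar : ybar = Matrix.vecMul c A⁻¹)
    (i : Fin m) (hfrac : ¬ ∃ z : ℤ, ybar i = (z : ℝ))
    (f : ℝ) (hf : f = ybar i - (⌊ybar i⌋ : ℝ))
    (rstar : Fin m → ℝ)
    (hrstar : ∀ k, rstar k = max 0 (-(⌊A⁻¹ k i⌋ : ℝ)))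
    (r' : Fin m → ℝ)
    (hr'Z : ∀ k, ∃ z : ℤ, r' k = (z : ℝ))
    (hr'H : ∀ k, -(A⁻¹ k i) ≤ r' k)
    (hr'0 : ∀ k, 0 ≤ r' k)
    (hge : ∀ k, rstar k ≤ r' k)
    (y : Fin m → ℝ) (hy : ∀ j, Matrix.vecMul y A j ≤ c j)
    (hcut : y ⬝ᵥ ((A.mulVec rstar - (f - 1) • (Pi.single i 1 : Fin m → ℝ))) ≤
      c ⬝ᵥ rstar - (f - 1) * (⌊ybar i⌋ : ℝ)) :
    y ⬝ᵥ ((A.mulVec r' - (f - 1) • (Pi.single i 1 : Fin m → ℝ))) ≤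
      c ⬝ᵥ r' - (f - 1) * (⌊ybar i⌋ : ℝ) := by
  have hv : ∀ k, 0 ≤ r' k - rstar k := fun k => sub_nonneg.mpr (hge k)
  have key : y ⬝ᵥ A.mulVec (r' - rstar) ≤ c ⬝ᵥ (r' - rstar) := by
    rw [dotProduct_mulVec]
    apply Finset.sum_le_sum
    intro k _
    exact mul_le_mul_of_nonneg_right (hy k) (hv k)
  have e1 : y ⬝ᵥ A.mulVec (r' - rstar) = y ⬝ᵥ A.mulVec r' - y ⬝ᵥ A.mulVec rstar := by
    rw [Matrix.mulVec_sub, dotProduct_sub]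
  have e2 : c ⬝ᵥ (r' - rstar) = c ⬝ᵥ r' - c ⬝ᵥ rstar := dotProduct_sub c r' rstar
  have e3 : y ⬝ᵥ ((A.mulVec r' - (f - 1) • (Pi.single i 1 : Fin m → ℝ)))
      = y ⬝ᵥ A.mulVec r' - y ⬝ᵥ ((f - 1) • (Pi.single i 1 : Fin m → ℝ)) :=
    dotProduct_sub y _ _
  have e4 : y ⬝ᵥ ((A.mulVec rstar - (f - 1) • (Pi.single i 1 : Fin m → ℝ)))
      = y ⬝ᵥ A.mulVec rstar - y ⬝ᵥ ((f - 1) • (Pi.single i 1 : Fin m → ℝ)) :=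
    dotProduct_sub y _ _
  rw [e4] at hcut
  rw [e3]
  linarith [key, e1, e2]
end

section
/- With B̄, c̄, and D as defined, suppose D ≠ 0. Then B̄ is invertible and the dual solution after the pivot is c̄ᵀ B̄⁻¹ = ȳᵀ + ((f − 1)·f / D) · (l-th row of A_β⁻¹); that is, the new dual basic solution equals ȳ plus the multiple (f − 1)·f / D of the l-th row of A_β⁻¹. -/
/-!
Writing `u := A⁻¹ v`, Cramer's rule gives `det B̄ = det A · u_l`, and `u_l = D`. For the dual
solution, `y' := ȳ + t · (A⁻¹)_{l·}` satisfies `y' A = c + t e_l`, so `y' B̄` agrees with `c̄` off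
column `l`, and on column `l` it equals `ȳ·v + t D`; choosing `t` as the reduced cost
`(c̄_l − ȳ·v) / D` makes `y' B̄ = c̄`. Here `c̄_l − ȳ·v = (f − 1)(ȳ_i − ⌊ȳ_i⌋) = (f − 1) f`,
because `ȳ A r = c·r`.
-/

open Matrix

namespace Matrix

variable {n : Type*} [Fintype n] [DecidableEq n]

theorem det_updateCol_eq_det_mul_inv_mulVec {R : Type*} [CommRing R] (A : Matrix n n R)
    (hA : IsUnit A.det) (j : n) (b : n → R) :
    (A.updateCol j b).det = A.det * (A⁻¹ *ᵥ b) j := by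
  rw [← cramer_apply, ← det_smul_inv_mulVec_eq_cramer A b hA, Pi.smul_apply, smul_eq_mul]

theorem isUnit_det_updateCol {R : Type*} [CommRing R] (A : Matrix n n R) (hA : IsUnit A.det)
    (j : n) (b : n → R) (hpivot : IsUnit ((A⁻¹ *ᵥ b) j)) : IsUnit (A.updateCol j b).det := by
  rw [det_updateCol_eq_det_mul_inv_mulVec A hA]
  exact hA.mul hpivot

theorem row_inv_vecMul_self {R : Type*} [CommRing R] (A : Matrix n n R) (hA : IsUnit A.det)
    (j : n) : A⁻¹ j ᵥ* A = Pi.single j 1 := by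
  rw [← mul_apply_eq_vecMul, nonsing_inv_mul A hA]
  ext k
  exact one_eq_pi_single

theorem vecMul_inv_updateCol {K : Type*} [Field K] (A : Matrix n n K) (hA : IsUnit A.det)
    (c v : n → K) (l : n) (γ : K) (hpivot : (A⁻¹ *ᵥ v) l ≠ 0) :
    Function.update c l γ ᵥ* (A.updateCol l v)⁻¹ =
      c ᵥ* A⁻¹ + ((γ - (c ᵥ* A⁻¹) ⬝ᵥ v) / (A⁻¹ *ᵥ v) l) • A⁻¹ l := by
  set t := (γ - (c ᵥ* A⁻¹) ⬝ᵥ v) / (A⁻¹ *ᵥ v) l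
  have hyA : (c ᵥ* A⁻¹ + t • A⁻¹ l) ᵥ* A = c + t • Pi.single l 1 := by
    rw [add_vecMul, smul_vecMul, vecMul_vecMul, nonsing_inv_mul A hA, vecMul_one,
      row_inv_vecMul_self A hA]
  have hyv : (c ᵥ* A⁻¹ + t • A⁻¹ l) ⬝ᵥ v = γ := by
    have hrow : A⁻¹ l ⬝ᵥ v = (A⁻¹ *ᵥ v) l := rfl
    rw [add_dotProduct, smul_dotProduct, hrow, smul_eq_mul, div_mul_cancel₀ _ hpivot]
    ring
  have hyB : (c ᵥ* A⁻¹ + t • A⁻¹ l) ᵥ* A.updateCol l v = Function.update c l γ := by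
    rw [vecMul_updateCol, hyA, hyv]
    ext j
    rcases eq_or_ne j l with rfl | hj <;> simp [*]
  rw [← hyB, vecMul_vecMul, mul_nonsing_inv _ (isUnit_det_updateCol A hA l v hpivot.isUnit),
    vecMul_one]

end Matrix

theorem stmt_16_general (m : ℕ)
    (A : Matrix (Fin m) (Fin m) ℝ) (hA : IsUnit A.det)
    (c : Fin m → ℝ)
    (ybar : Fin m → ℝ) (hybar : ybar = Matrix.vecMul c A⁻¹)
    (i : Fin m)
    (f : ℝ) (hf : f = ybar i - (⌊ybar i⌋ : ℝ))
    (r : Fin m → ℝ) (l : Fin m)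
    (v : Fin m → ℝ) (hv : v = (A.mulVec r - (f - 1) • (Pi.single i 1 : Fin m → ℝ)))
    (B : Matrix (Fin m) (Fin m) ℝ) (hB : B = A.updateCol l v)
    (cbar : Fin m → ℝ)
    (hcbar : cbar = Function.update c l (c ⬝ᵥ r - (f - 1) * (⌊ybar i⌋ : ℝ)))
    (D : ℝ) (hD : D = r l - (f - 1) * A⁻¹ l i) (hD0 : D ≠ 0) :
    IsUnit B.det ∧
      Matrix.vecMul cbar B⁻¹ = fun j => ybar j + ((f - 1) * f / D) * A⁻¹ l j := by
  have hpivot : (A⁻¹ *ᵥ v) l = D := by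
    rw [hv, mulVec_sub, mulVec_smul, mulVec_mulVec, nonsing_inv_mul A hA, one_mulVec,
      mulVec_single, hD]
    simp [mul_comm]
  have hreduced : c ⬝ᵥ r - (f - 1) * ⌊ybar i⌋ - ybar ⬝ᵥ v = (f - 1) * f := by
    rw [hv, dotProduct_sub, dotProduct_mulVec, hybar, vecMul_vecMul, nonsing_inv_mul A hA,
      vecMul_one, dotProduct_smul, dotProduct_single, ← hybar, hf]
    simp only [smul_eq_mul]
    ring
  subst hB hcbar
  refine ⟨isUnit_det_updateCol A hA l v (hpivot ▸ hD0.isUnit), ?_⟩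
  rw [vecMul_inv_updateCol A hA c v l _ (hpivot ▸ hD0), ← hybar, hreduced, hpivot]
  rfl

/-- If `D ≠ 0`, then `B̄` is invertible and
`c̄ᵀ B̄⁻¹ = ȳᵀ + ((f − 1)·f / D) · (l-th row of A_β⁻¹)`. -/
theorem stmt_16 (m : ℕ) (hm : 0 < m)
    (A : Matrix (Fin m) (Fin m) ℝ) (hA : IsUnit A.det)
    (hAint : ∀ k j, ∃ z : ℤ, A k j = (z : ℝ))
    (c : Fin m → ℝ) (hcint : ∀ k, ∃ z : ℤ, c k = (z : ℝ))
    (ybar : Fin m → ℝ) (hybar : ybar = Matrix.vecMul c A⁻¹)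
    (i : Fin m) (hfrac : ¬ ∃ z : ℤ, ybar i = (z : ℝ))
    (f : ℝ) (hf : f = ybar i - (⌊ybar i⌋ : ℝ))
    (r : Fin m → ℝ) (l : Fin m)
    (v : Fin m → ℝ) (hv : v = (A.mulVec r - (f - 1) • (Pi.single i 1 : Fin m → ℝ)))
    (B : Matrix (Fin m) (Fin m) ℝ) (hB : B = A.updateCol l v)
    (cbar : Fin m → ℝ)
    (hcbar : cbar = Function.update c l (c ⬝ᵥ r - (f - 1) * (⌊ybar i⌋ : ℝ)))
    (D : ℝ) (hD : D = r l - (f - 1) * A⁻¹ l i) (hD0 : D ≠ 0) :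
    IsUnit B.det ∧
      Matrix.vecMul cbar B⁻¹ = fun j => ybar j + ((f - 1) * f / D) * A⁻¹ l j :=
  stmt_16_general m A hA c ybar hybar i f hf r l v hv B hB cbar hcbar D hD hD0
end
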